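/- arXiv:cs/0502080 — 2 statements merged into one kernel-verified Lean document; each statement's English description precedes it below -/
import Mathlib

section
/- The optimal correlation tends to one as SNR tends to zero: for every ε > 0 there exists δ > 0 such that for all Γ ∈ (0,δ), every a* ∈ [0,1) satisfying K(a*,Γ) ≥ K(a,Γ) for all a ∈ [0,1) must satisfy a* > 1 − ε. -/
/-- The steady-state prediction error variance `P(a, Γ)`: the unique positive root of
`P² + (1 − a²)(1 − Γ)P − Γ(1 − a²) = 0`, given in closed form. -/
noncomputable def Pss (a Γ : ℝ) : ℝ :=
  ((1 - a ^ 2) * (Γ - 1) +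
    Real.sqrt ((1 - a ^ 2) ^ 2 * (1 - Γ) ^ 2 + 4 * Γ * (1 - a ^ 2))) / 2

/-- The steady-state Kalman gain factor `K_p = a·P/(1+P)`. -/
noncomputable def Kgain (a Γ : ℝ) : ℝ := a * Pss a Γ / (1 + Pss a Γ)

/-- `P̃ = K_p²/(1 − (a − K_p)²)`, the solution of the Lyapunov equation. -/
noncomputable def Ptilde (a Γ : ℝ) : ℝ :=
  (Kgain a Γ) ^ 2 / (1 - (a - Kgain a Γ) ^ 2)

/-- The closed-form error exponent `K(a, Γ) = ½·log(1+P) + ½·(1+P̃)/(1+P) − ½`. -/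
noncomputable def Kexp (a Γ : ℝ) : ℝ :=
  (1 / 2) * Real.log (1 + Pss a Γ) + (1 / 2) * (1 + Ptilde a Γ) / (1 + Pss a Γ) - 1 / 2

section Aux

/-- basic facts about `Pss`: positivity and the defining quadratic. -/
lemma Pss_facts {a Γ : ℝ} (hb : 0 < 1 - a^2) (hΓ : 0 < Γ) :
    0 < Pss a Γ ∧ Pss a Γ ^ 2 + (1 - a^2) * (1 - Γ) * Pss a Γ - Γ * (1 - a^2) = 0 := by
  have hD : 0 ≤ (1 - a ^ 2) ^ 2 * (1 - Γ) ^ 2 + 4 * Γ * (1 - a ^ 2) := by positivity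
  have hs := Real.sq_sqrt hD
  have hsn := Real.sqrt_nonneg ((1 - a ^ 2) ^ 2 * (1 - Γ) ^ 2 + 4 * Γ * (1 - a ^ 2))
  have hlt : (1 - a^2) * (1 - Γ) <
      Real.sqrt ((1 - a ^ 2) ^ 2 * (1 - Γ) ^ 2 + 4 * Γ * (1 - a ^ 2)) := by
    nlinarith [sq_nonneg (Real.sqrt ((1 - a ^ 2) ^ 2 * (1 - Γ) ^ 2 + 4 * Γ * (1 - a ^ 2))
      - (1 - a^2)*(1-Γ))]
  constructor
  · unfold Pss; nlinarith
  · unfold Pss; nlinarith [hs]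

/-- closed form for `Ptilde`. -/
lemma Ptilde_eq {a Γ : ℝ} (hP : 0 < Pss a Γ) (ha : a^2 < 1) :
    Ptilde a Γ = a^2 * Pss a Γ ^ 2 / ((1 + Pss a Γ)^2 - a^2) := by
  set P := Pss a Γ with hPdef
  have h1 : (1:ℝ) + P ≠ 0 := by positivity
  have hD : ((1 + P)^2 - a^2) ≠ 0 := by nlinarith
  have h2 : a - Kgain a Γ = a / (1 + P) := by
    rw [Kgain, ← hPdef]; field_simp; ring
  have h3 : 1 - (a - Kgain a Γ)^2 = ((1 + P)^2 - a^2) / (1 + P)^2 := by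
    rw [h2]; field_simp
  rw [Ptilde, h3, Kgain, ← hPdef]
  field_simp

/-- Upper bound on the exponent for `a` bounded away from 1. -/
lemma Kexp_upper {a Γ ε : ℝ} (hε : 0 < ε) (hε1 : ε ≤ 1) (ha0 : 0 ≤ a) (ha1 : a ≤ 1 - ε)
    (hΓ : 0 < Γ) (hΓ2 : Γ ≤ 1/2) : ε * Kexp a Γ ≤ 4 * Γ^2 := by
  have ha : a^2 < 1 := by nlinarith
  have hb : 0 < 1 - a^2 := by nlinarith
  obtain ⟨hP0, hquad⟩ := Pss_facts hb hΓ
  set P := Pss a Γ with hPdef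
  have h1P : (0:ℝ) < 1 + P := by linarith
  have hD : 0 < (1 + P)^2 - a^2 := by nlinarith
  have hbε : ε ≤ 1 - a^2 := by nlinarith
  -- (1-Γ) P ≤ Γ, hence P ≤ 2Γ
  have h8 : (1 - Γ) * P ≤ Γ := by nlinarith [sq_nonneg P]
  have hPub : P ≤ 2 * Γ := by
    nlinarith [mul_le_mul_of_nonneg_right hΓ2 hP0.le]
  set T := Ptilde a Γ with hTdef
  have hTeq : T = a^2 * P^2 / ((1 + P)^2 - a^2) := Ptilde_eq hP0 ha
  have hT0 : 0 ≤ T := by rw [hTeq]; positivity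
  -- ε * T ≤ P^2
  have hTub : ε * T ≤ P^2 := by
    rw [hTeq, ← mul_div_assoc, div_le_iff₀ hD]
    nlinarith [mul_le_mul_of_nonneg_right hbε (sq_nonneg P),
      mul_nonneg (mul_nonneg hε.le hb.le) (sq_nonneg P),
      mul_nonneg (by positivity : (0:ℝ) ≤ 2*P + P^2) (sq_nonneg P)]
  have hlog : Real.log (1 + P) ≤ P := by
    have := Real.log_le_sub_one_of_pos h1P; linarith
  have h4 : (1/2) * (1 + T) / (1 + P) ≤ (1/2) * (1 - P + P^2 + T) := by
    rw [div_le_iff₀ h1P]; nlinarith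
  have hK : Kexp a Γ = (1/2) * Real.log (1 + P) + (1/2) * (1 + T) / (1 + P) - 1/2 := rfl
  have hKub : Kexp a Γ ≤ (1/2) * P^2 + (1/2) * T := by
    rw [hK]; linarith [hlog, h4]
  nlinarith [mul_le_mul_of_nonneg_left hKub hε.le, hTub,
    mul_le_mul hPub hPub hP0.le (by positivity),
    mul_le_mul_of_nonneg_right hε1 (sq_nonneg P)]

/-- Lower bound on the exponent at `a = √(1−Γ)`. -/
lemma Kexp_lower {Γ : ℝ} (hΓ : 0 < Γ) (hΓ2 : Γ ≤ 1/2) :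
    Γ / 224 ≤ Kexp (Real.sqrt (1 - Γ)) Γ := by
  set a := Real.sqrt (1 - Γ) with hadef
  have ha2 : a^2 = 1 - Γ := Real.sq_sqrt (by linarith)
  have hb : 0 < 1 - a^2 := by rw [ha2]; linarith
  have ha : a^2 < 1 := by linarith
  obtain ⟨hP0, hquad⟩ := Pss_facts hb hΓ
  set P := Pss a Γ with hPdef
  have hquad' : P^2 + Γ * (1 - Γ) * P - Γ * Γ = 0 := by
    calc P^2 + Γ * (1 - Γ) * P - Γ * Γ
        = P ^ 2 + (1 - a^2) * (1 - Γ) * P - Γ * (1 - a^2) + (Γ - (1 - a^2)) * ((1-Γ)*P - Γ) := by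
          rw [ha2]; ring
      _ = 0 := by rw [hquad, ha2]; ring
  have h1P : (0:ℝ) < 1 + P := by linarith
  have h8 : (1 - Γ) * P ≤ Γ := by nlinarith [sq_nonneg P]
  have hPub : P ≤ 2 * Γ := by
    nlinarith [mul_le_mul_of_nonneg_right hΓ2 hP0.le]
  have hPlb : Γ / 2 ≤ P := by nlinarith
  have hP1 : P ≤ 1 := by linarith
  have hD : 0 < (1 + P)^2 - a^2 := by nlinarith
  set T := Ptilde a Γ with hTdef
  have hTeq : T = a^2 * P^2 / ((1 + P)^2 - a^2) := Ptilde_eq hP0 ha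
  have hTlb : Γ / 56 ≤ T := by
    rw [hTeq, le_div_iff₀ hD, ha2]
    nlinarith [mul_le_mul hPlb hPlb (by positivity) hP0.le,
      mul_le_mul_of_nonneg_left hPub hΓ.le,
      mul_le_mul_of_nonneg_left hPub (mul_nonneg hΓ.le hP0.le),
      mul_le_mul_of_nonneg_left hPub (mul_nonneg hΓ.le hΓ.le),
      sq_nonneg (P - Γ/2), sq_nonneg P]
  have hlog : P / (1 + P) ≤ Real.log (1 + P) := by
    have h := Real.log_le_sub_one_of_pos (show (0:ℝ) < (1+P)⁻¹ by positivity)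
    rw [Real.log_inv] at h
    rw [div_le_iff₀ h1P]
    have h2 : (1+P)⁻¹ * (1+P) = 1 := inv_mul_cancel₀ (ne_of_gt h1P)
    nlinarith [mul_le_mul_of_nonneg_right h h1P.le]
  have hK : Kexp a Γ = (1/2) * Real.log (1 + P) + (1/2) * (1 + T) / (1 + P) - 1/2 := rfl
  have h6 : (1/2) * (P/(1+P)) + (1/2) * (1 + T) / (1 + P) - 1/2 = ((1/2) * T) / (1 + P) := by
    field_simp; ring
  have h7 : Γ / 224 ≤ ((1/2) * T) / (1 + P) := by
    rw [le_div_iff₀ h1P]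
    nlinarith [mul_le_mul_of_nonneg_left hP1 hΓ.le]
  rw [hK]
  have h9 : (1/2) * (P/(1+P)) ≤ (1/2) * Real.log (1 + P) := by linarith
  linarith [h6, h7, h9]

/-- main statement for ε ≤ 1 -/
lemma main_aux (ε : ℝ) (hε : 0 < ε) (hε1 : ε ≤ 1) :
    ∃ δ > (0 : ℝ), ∀ Γ : ℝ, 0 < Γ → Γ < δ →
      ∀ astar ∈ Set.Ico (0 : ℝ) 1,
        (∀ a ∈ Set.Ico (0 : ℝ) 1, Kexp a Γ ≤ Kexp astar Γ) → 1 - ε < astar := by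
  refine ⟨min (1/2) (ε/897), by positivity, fun Γ hΓ hΓδ astar hstar hmax => ?_⟩
  have hΓ2 : Γ ≤ 1/2 := le_of_lt (lt_of_lt_of_le hΓδ (min_le_left _ _))
  have hΓε : Γ < ε/897 := lt_of_lt_of_le hΓδ (min_le_right _ _)
  by_contra hcon
  push_neg at hcon
  have ha1 : astar ≤ 1 - ε := hcon
  have ha0 : 0 ≤ astar := hstar.1
  have hub := Kexp_upper hε hε1 ha0 ha1 hΓ hΓ2
  have ha₀ : Real.sqrt (1 - Γ) ∈ Set.Ico (0:ℝ) 1 := by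
    refine ⟨Real.sqrt_nonneg _, ?_⟩
    have := Real.sqrt_lt_sqrt (by linarith : (0:ℝ) ≤ 1 - Γ) (show 1 - Γ < 1 by linarith)
    rwa [Real.sqrt_one] at this
  have hlb := Kexp_lower hΓ hΓ2
  have hchain := le_trans hlb (hmax _ ha₀)
  have hfin : ε * (Γ/224) ≤ 4 * Γ^2 :=
    le_trans (mul_le_mul_of_nonneg_left hchain hε.le) hub
  nlinarith [mul_pos hε hΓ, mul_lt_mul_of_pos_left hΓε (by positivity : (0:ℝ) < 4*Γ)]

end Aux

/-- The optimal correlation tends to one as SNR tends to zero: for every `ε > 0` there is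
`δ > 0` such that for all `Γ ∈ (0,δ)`, every maximizer `astar ∈ [0,1)` of `K(·,Γ)` over `[0,1)`
satisfies `astar > 1 − ε`. -/
theorem optimal_correlation_tendsto_one_at_low_snr :
    ∀ ε > (0 : ℝ), ∃ δ > (0 : ℝ), ∀ Γ : ℝ, 0 < Γ → Γ < δ →
      ∀ astar ∈ Set.Ico (0 : ℝ) 1,
        (∀ a ∈ Set.Ico (0 : ℝ) 1, Kexp a Γ ≤ Kexp astar Γ) → 1 - ε < astar := by
  intro ε hε
  obtain ⟨δ, hδ, h⟩ := main_aux (min ε 1) (lt_min hε one_pos) (min_le_right _ _)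
  refine ⟨δ, hδ, fun Γ hΓ hΓδ astar hstar hmax => ?_⟩
  have h1 := h Γ hΓ hΓδ astar hstar hmax
  have hle : 1 - ε ≤ 1 - min ε 1 := by
    have := min_le_left ε 1; linarith
  linarith
end

section
/- For a ∈ [0,1) and Γ > 0, the error exponent is strictly positive: K(a,Γ) > 0. -/
/-!
Write `x = 1 + P`. Then `2 K = (log x + x⁻¹ - 1) + P̃ / x`. For `P > 0` the first summand is
positive by the strict inequality `1 - x⁻¹ < log x` (`x ≠ 1`), and the second is nonnegative
because `a - K_p = a / (1 + P)`, so the Lyapunov denominator `1 - (a - K_p)²` is nonnegative.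
-/

open Real

lemma Real.one_sub_inv_lt_log {x : ℝ} (hx0 : 0 < x) (hx1 : x ≠ 1) : 1 - x⁻¹ < log x := by
  have h := log_lt_sub_one_of_pos (inv_pos.2 hx0) (inv_ne_one.2 hx1)
  rw [log_inv] at h
  linarith

section ErrorExponent

variable {a Γ : ℝ}

lemma Pss_pos (ha : a ^ 2 < 1) (hΓ : 0 < Γ) : 0 < Pss a Γ := by
  have hlt : (1 - a ^ 2) * (1 - Γ) <
      √((1 - a ^ 2) ^ 2 * (1 - Γ) ^ 2 + 4 * Γ * (1 - a ^ 2)) :=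
    lt_sqrt_of_sq_lt (by nlinarith)
  unfold Pss
  linarith

lemma sub_Kgain (hP : 1 + Pss a Γ ≠ 0) : a - Kgain a Γ = a / (1 + Pss a Γ) := by
  unfold Kgain
  field_simp
  ring

lemma Ptilde_nonneg (ha : a ^ 2 ≤ 1) (hP : 0 ≤ Pss a Γ) : 0 ≤ Ptilde a Γ := by
  have hx : 1 ≤ 1 + Pss a Γ := by linarith
  have hsq : (a - Kgain a Γ) ^ 2 ≤ 1 := by
    rw [sub_Kgain (by positivity), div_pow, div_le_one (by positivity)]
    nlinarith
  exact div_nonneg (sq_nonneg _) (sub_nonneg.2 hsq)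

lemma Kexp_eq :
    Kexp a Γ = (log (1 + Pss a Γ) + (1 + Pss a Γ)⁻¹ - 1) / 2 +
      Ptilde a Γ / (1 + Pss a Γ) / 2 := by
  unfold Kexp
  ring

end ErrorExponent

/-- For `a ∈ [0,1)` and `Γ > 0`, the error exponent is strictly positive: `K(a,Γ) > 0`. -/
theorem errorExponent_pos (a Γ : ℝ) (ha0 : 0 ≤ a) (ha1 : a < 1) (hΓ : 0 < Γ) :
    0 < Kexp a Γ := by
  have ha : a ^ 2 < 1 := by nlinarith
  have hP := Pss_pos ha hΓ
  have hlog := one_sub_inv_lt_log (x := 1 + Pss a Γ) (by linarith) (by linarith)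
  have hfrac : 0 ≤ Ptilde a Γ / (1 + Pss a Γ) :=
    div_nonneg (Ptilde_nonneg ha.le hP.le) (by linarith)
  rw [Kexp_eq]
  linarith
end
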